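/- arXiv:2112.07952 — 2 statements merged into one kernel-verified Lean document; each statement's English description precedes it below -/
import Mathlib

section
/- For every d ∈ ω \ {0}: non(HDZ) = non(HDZ_{ℝ^d}) and cov(HDZ) = cov(HDZ_{ℝ^d}). -/
open Set

/-- The Cantor space `2^ω = ℕ → Bool` carries the metric
`d(x,y) = 2^{-min{n : x n ≠ y n}}` (and `d(x,x) = 0`). -/
noncomputable local instance cantorMetric : MetricSpace (ℕ → Bool) := PiNat.metricSpace

/-- `HDZ X` is the ideal of subsets of `X` of Hausdorff dimension `0`. -/
def HDZ (X : Type*) [EMetricSpace X] : Set (Set X) := {A : Set X | dimH A = 0}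

/-- The uniformity number of a family `I` of subsets of `X`:
the least cardinality of a subset of `X` not belonging to `I`. -/
noncomputable def idealNon {X : Type*} (I : Set (Set X)) : Cardinal :=
  sInf {c : Cardinal | ∃ A : Set X, A ∉ I ∧ c = Cardinal.mk A}

/-- The covering number of a family `I` of subsets of `X`:
the least cardinality of a subfamily of `I` covering `X`. -/
noncomputable def idealCov {X : Type*} (I : Set (Set X)) : Cardinal :=
  sInf {c : Cardinal | ∃ F : Set (Set X), F ⊆ I ∧ ⋃₀ F = univ ∧ c = Cardinal.mk F}

/-!
Both cardinal invariants can be transported along a map `f : X → Y` under which preimages of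
dimension-zero sets have dimension zero: it gives `non(HDZ_Y) ≤ non(HDZ_X)`, since images of sets
of positive dimension have positive dimension, and `cov(HDZ_X) ≤ cov(HDZ_Y)`, by pulling back
covers. A map has this property as soon as it has countably many Hölder partial inverses with a
common positive exponent, because a Hölder map of exponent `r` multiplies Hausdorff dimension by at
most `1 / r`.

From `2^ω` to `ℝ^d` we take the ternary Cantor-set embedding into the diagonal, whose inverse is
Hölder of exponent `log 2 / log 3`. Back from `ℝ^d`, the map reading interleaved binary digits
is a Hölder surjection `2^ω → [0, 1]^d` of exponent `1 / d`; its integer translates cover `ℝ^d`,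
and we send each point to one of its preimages. Finally, the Euclidean and the sup metric on `ℝ^d`
differ by a linear equivalence, which preserves Hausdorff dimension.
-/

open scoped NNReal

universe u

section CardinalInvariants

variable {X Y : Type u}

theorem idealNon_le_of_preimage_mem {I : Set (Set X)} {J : Set (Set Y)} (hI : IsLowerSet I)
    (hX : univ ∉ I) {f : X → Y} (hf : ∀ B ∈ J, f ⁻¹' B ∈ I) : idealNon J ≤ idealNon I := by
  unfold idealNon
  refine le_csInf ⟨_, univ, hX, rfl⟩ ?_
  rintro _ ⟨A, hA, rfl⟩
  have hfA : f '' A ∉ J := fun h => hA (hI (subset_preimage_image f A) (hf _ h))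
  exact le_trans (csInf_le' ⟨f '' A, hfA, rfl⟩) Cardinal.mk_image_le

theorem idealCov_le_of_preimage_mem {I : Set (Set X)} {J : Set (Set Y)} (hJ : ⋃₀ J = univ)
    {f : X → Y} (hf : ∀ B ∈ J, f ⁻¹' B ∈ I) : idealCov I ≤ idealCov J := by
  unfold idealCov
  refine le_csInf ⟨_, J, subset_rfl, hJ, rfl⟩ ?_
  rintro _ ⟨F, hFJ, hF, rfl⟩
  refine le_trans (csInf_le' ⟨preimage f '' F, ?_, ?_, rfl⟩) Cardinal.mk_image_le
  · rintro _ ⟨B, hB, rfl⟩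
    exact hf B (hFJ hB)
  · rw [sUnion_image, ← preimage_iUnion₂, ← sUnion_eq_biUnion, hF, preimage_univ]

end CardinalInvariants

theorem HolderOnWith.of_dist_le {X Y : Type*} [PseudoMetricSpace X] [PseudoMetricSpace Y]
    {f : X → Y} {s : Set X} {C : ℝ≥0} {r : ℝ} (hr : 0 ≤ r)
    (h : ∀ x ∈ s, ∀ y ∈ s, dist (f x) (f y) ≤ C * dist x y ^ r) :
    HolderOnWith C r.toNNReal f s := by
  intro x hx y hy
  rw [edist_dist, edist_dist, Real.coe_toNNReal r hr,
    ENNReal.ofReal_rpow_of_nonneg dist_nonneg hr, ← ENNReal.ofReal_coe_nnreal,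
    ← ENNReal.ofReal_mul C.coe_nonneg]
  exact ENNReal.ofReal_le_ofReal (h x hx y hy)

section HDZ

variable {X Y : Type*}

theorem isLowerSet_HDZ [EMetricSpace X] : IsLowerSet (HDZ X) :=
  fun _ _ hBA hA => nonpos_iff_eq_zero.1 (hA ▸ dimH_mono hBA)

theorem sUnion_HDZ [EMetricSpace X] : ⋃₀ HDZ X = univ :=
  eq_univ_of_forall fun x => ⟨{x}, dimH_singleton x, rfl⟩

theorem preimage_mem_HDZ_of_holderOnWith [EMetricSpace X] [EMetricSpace Y] {ι : Type*}
    [Countable ι] {f : X → Y} {u : ι → Y → X} {s : ι → Set Y} {C : ι → ℝ≥0} {r : ℝ≥0}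
    (hr : 0 < r) (hu : ∀ i, HolderOnWith (C i) r (u i) (s i))
    (hf : ∀ x, ∃ i, f x ∈ s i ∧ u i (f x) = x) {S : Set Y} (hS : S ∈ HDZ Y) :
    f ⁻¹' S ∈ HDZ X := by
  have hcover : f ⁻¹' S ⊆ ⋃ i, u i '' (S ∩ s i) := fun x hx =>
    let ⟨i, hxs, hux⟩ := hf x
    mem_iUnion.2 ⟨i, f x, ⟨hx, hxs⟩, hux⟩
  refine isLowerSet_HDZ hcover ?_
  simp only [HDZ, mem_ofPred_eq, dimH_iUnion, ENNReal.iSup_eq_zero]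
  intro i
  refine nonpos_iff_eq_zero.1 ((((hu i).mono inter_subset_right).dimH_image_le hr).trans ?_)
  rw [isLowerSet_HDZ inter_subset_left hS, ENNReal.zero_div]

theorem preimage_mem_HDZ_of_dist_le_mul_rpow [MetricSpace X] [MetricSpace Y] {f : X → Y}
    {C : ℝ≥0} {r : ℝ} (hr : 0 < r) (h : ∀ x y, dist x y ≤ C * dist (f x) (f y) ^ r)
    {S : Set Y} (hS : S ∈ HDZ Y) : f ⁻¹' S ∈ HDZ X := by
  rcases isEmpty_or_nonempty X with hX | _
  · simp [HDZ, eq_empty_of_isEmpty]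
  have hinj : f.Injective := fun x y hxy =>
    dist_le_zero.1 <| by simpa [hxy, Real.zero_rpow hr.ne'] using h x y
  refine preimage_mem_HDZ_of_holderOnWith (ι := Unit) (u := fun _ => Function.invFun f)
    (s := fun _ => range f) (C := fun _ => C) (Real.toNNReal_pos.2 hr)
    (fun _ => .of_dist_le hr.le ?_)
    (fun x => ⟨(), mem_range_self x, Function.leftInverse_invFun hinj x⟩) hS
  rintro _ ⟨x, rfl⟩ _ ⟨y, rfl⟩
  simpa only [Function.leftInverse_invFun hinj _] using h x y

theorem exists_preimage_mem_HDZ_of_forall_exists_eq [MetricSpace X] [MetricSpace Y] {ι : Type*}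
    [Countable ι] {v : ι → X → Y} {C : ℝ≥0} {r : ℝ} (hr : 0 < r)
    (hv : ∀ i x y, dist (v i x) (v i y) ≤ C * dist x y ^ r) (hcover : ∀ y, ∃ i x, v i x = y) :
    ∃ g : Y → X, ∀ S ∈ HDZ X, g ⁻¹' S ∈ HDZ Y := by
  choose i g hg using hcover
  exact ⟨g, fun S hS => preimage_mem_HDZ_of_holderOnWith (Real.toNNReal_pos.2 hr)
    (fun i => .of_dist_le (s := univ) hr.le fun x _ y _ => hv i x y)
    (fun y => ⟨i y, mem_univ _, hg y⟩) hS⟩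

end HDZ

theorem idealNon_HDZ_eq_and_idealCov_HDZ_eq {X Y : Type u} [EMetricSpace X] [EMetricSpace Y]
    (hY : univ ∉ HDZ Y) {f : X → Y} {g : Y → X} (hf : ∀ S ∈ HDZ Y, f ⁻¹' S ∈ HDZ X)
    (hg : ∀ S ∈ HDZ X, g ⁻¹' S ∈ HDZ Y) :
    idealNon (HDZ X) = idealNon (HDZ Y) ∧ idealCov (HDZ X) = idealCov (HDZ Y) := by
  have hX : univ ∉ HDZ X := fun h => hY (by simpa using hg univ h)
  exact ⟨le_antisymm (idealNon_le_of_preimage_mem isLowerSet_HDZ hY hg)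
      (idealNon_le_of_preimage_mem isLowerSet_HDZ hX hf),
    le_antisymm (idealCov_le_of_preimage_mem sUnion_HDZ hf)
      (idealCov_le_of_preimage_mem sUnion_HDZ hg)⟩

noncomputable def ternaryEmbedding (x : ℕ → Bool) : ℝ :=
  Real.ofDigits fun i => cond (x i) (2 : Fin 3) 0

theorem inv_three_pow_le_abs_ternaryEmbedding_sub {x y : ℕ → Bool} {n : ℕ}
    (h : ∀ i < n, x i = y i) (hn : x n ≠ y n) :
    (3⁻¹ : ℝ) ^ (n + 1) ≤ |ternaryEmbedding x - ternaryEmbedding y| := by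
  wlog hx : x n = true generalizing x y
  · rw [abs_sub_comm]
    exact this (fun i hi => (h i hi).symm) hn.symm (by simpa [hx] using hn.symm)
  have hy : y n = false := by simpa [hx] using hn.symm
  set a : ℕ → Fin 3 := fun i => cond (x i) 2 0
  set b : ℕ → Fin 3 := fun i => cond (y i) 2 0
  have hhead : ∑ i ∈ Finset.range n, Real.ofDigitsTerm a i =
      ∑ i ∈ Finset.range n, Real.ofDigitsTerm b i :=
    Finset.sum_congr rfl fun i hi => by
      simp only [Real.ofDigitsTerm, a, b, h i (Finset.mem_range.1 hi)]
  have hdigit : Real.ofDigitsTerm a n - Real.ofDigitsTerm b n = 2 * (3 ^ (n + 1))⁻¹ := by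
    simp [Real.ofDigitsTerm, a, b, hx, hy]
  rw [ternaryEmbedding, ternaryEmbedding, Real.ofDigits_eq_sum_add_ofDigits a (n + 1),
    Real.ofDigits_eq_sum_add_ofDigits b (n + 1), Finset.sum_range_succ, Finset.sum_range_succ,
    hhead]
  have hc : (0 : ℝ) < ((3 : ℕ) ^ (n + 1) : ℝ)⁻¹ := by positivity
  have hta := mul_nonneg hc.le (Real.ofDigits_nonneg fun i => a (i + (n + 1)))
  have htb := mul_le_of_le_one_right hc.le (Real.ofDigits_le_one fun i => b (i + (n + 1)))
  refine le_trans ?_ (le_abs_self _)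
  push_cast at hc hta htb ⊢
  rw [inv_pow]
  linarith

theorem dist_le_two_mul_dist_ternaryEmbedding_rpow (x y : ℕ → Bool) :
    dist x y ≤ 2 * dist (ternaryEmbedding x) (ternaryEmbedding y) ^ Real.logb 3 2 := by
  rcases eq_or_ne x y with rfl | hne
  · simp [Real.rpow_nonneg]
  set m := PiNat.firstDiff x y
  have hlow := inv_three_pow_le_abs_ternaryEmbedding_sub
    (fun i hi => PiNat.apply_eq_of_lt_firstDiff hi) (PiNat.apply_firstDiff_ne hne)
  have hscale : ((3⁻¹ : ℝ) ^ (m + 1)) ^ Real.logb 3 2 = 2⁻¹ ^ (m + 1) := by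
    rw [← Real.rpow_pow_comm (by norm_num), Real.inv_rpow (by norm_num),
      Real.rpow_logb (by norm_num) (by norm_num) (by norm_num)]
  calc dist x y = (1 / 2) ^ m := PiNat.dist_eq_of_ne hne
    _ = 2 * ((3⁻¹ : ℝ) ^ (m + 1)) ^ Real.logb 3 2 := by rw [hscale]; ring
    _ ≤ 2 * dist (ternaryEmbedding x) (ternaryEmbedding y) ^ Real.logb 3 2 := by
      rw [Real.dist_eq]
      gcongr
      exact Real.logb_nonneg (by norm_num) (by norm_num)

noncomputable def binaryValue (x : ℕ → Bool) : ℝ :=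
  Real.ofDigits fun i => finTwoEquiv.symm (x i)

theorem abs_binaryValue_sub_le {x y : ℕ → Bool} {n : ℕ} (h : ∀ i < n, x i = y i) :
    |binaryValue x - binaryValue y| ≤ (2 ^ n)⁻¹ := by
  simpa [binaryValue] using
    Real.abs_ofDigits_sub_ofDigits_le fun i hi => congrArg finTwoEquiv.symm (h i hi)

theorem surjOn_binaryValue : SurjOn binaryValue univ (Ico 0 1) := fun t ht =>
  ⟨finTwoEquiv ∘ Real.digits t 2, mem_univ _, by
    simp [binaryValue, Real.ofDigits_digits one_lt_two ht]⟩

section Cube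

variable (d : ℕ) [NeZero d]

-- Coordinate `i` has the binary digits `x i, x (d + i), x (2 * d + i), …`.
noncomputable def cubeOfDigits (x : ℕ → Bool) (i : Fin d) : ℝ :=
  binaryValue fun j => x ((Nat.divModEquiv d).symm (j, i))

theorem inv_two_pow_div_le_two_mul_rpow (m : ℕ) :
    ((2 : ℝ) ^ (m / d))⁻¹ ≤ 2 * ((1 / 2 : ℝ) ^ m) ^ (d⁻¹ : ℝ) := by
  have hexp : (m : ℝ) / d ≤ (m / d : ℕ) + 1 := by
    rw [div_le_iff₀ (Nat.cast_pos.2 (NeZero.pos d))]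
    have h := (Nat.lt_div_mul_add (a := m) (NeZero.pos d)).le
    exact_mod_cast (show m ≤ (m / d + 1) * d by rwa [add_one_mul])
  calc ((2 : ℝ) ^ (m / d))⁻¹ = 2 * (1 / 2 : ℝ) ^ ((m / d : ℕ) + 1 : ℝ) := by
        rw [Real.rpow_add_one (by norm_num), Real.rpow_natCast, one_div, inv_pow]
        ring
    _ ≤ 2 * (1 / 2 : ℝ) ^ ((m : ℝ) / d) :=
        mul_le_mul_of_nonneg_left
          (Real.rpow_le_rpow_of_exponent_ge (by norm_num) (by norm_num) hexp) zero_le_two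
    _ = 2 * ((1 / 2 : ℝ) ^ m) ^ (d⁻¹ : ℝ) := by
        rw [← Real.rpow_natCast, ← Real.rpow_mul (by norm_num), ← div_eq_mul_inv]

theorem dist_cubeOfDigits_le (x y : ℕ → Bool) :
    dist (cubeOfDigits d x) (cubeOfDigits d y) ≤ 2 * dist x y ^ (d⁻¹ : ℝ) := by
  rcases eq_or_ne x y with rfl | hne
  · simp [Real.rpow_nonneg]
  set m := PiNat.firstDiff x y
  have hcoord (i : Fin d) :
      dist (cubeOfDigits d x i) (cubeOfDigits d y i) ≤ ((2 : ℝ) ^ (m / d))⁻¹ := by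
    refine (Real.dist_eq _ _).trans_le (abs_binaryValue_sub_le fun j hj => ?_)
    refine PiNat.apply_eq_of_lt_firstDiff ?_
    have := Nat.div_mul_le_self m d
    simp only [Nat.divModEquiv_symm_apply]
    nlinarith [i.is_lt]
  calc dist (cubeOfDigits d x) (cubeOfDigits d y) ≤ ((2 : ℝ) ^ (m / d))⁻¹ :=
        (dist_pi_le_iff (by positivity)).2 hcoord
    _ ≤ 2 * dist x y ^ (d⁻¹ : ℝ) := by
        rw [PiNat.dist_eq_of_ne hne]
        exact inv_two_pow_div_le_two_mul_rpow d m

theorem exists_intCast_add_cubeOfDigits_eq (z : Fin d → ℝ) :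
    ∃ (q : Fin d → ℤ) (x : ℕ → Bool), (fun i => (q i : ℝ)) + cubeOfDigits d x = z := by
  choose y hy using fun i =>
    surjOn_binaryValue ⟨Int.fract_nonneg (z i), Int.fract_lt_one (z i)⟩
  refine ⟨fun i => ⌊z i⌋, fun n => y (Nat.divModEquiv d n).2 (Nat.divModEquiv d n).1, ?_⟩
  funext i
  simp only [Pi.add_apply, cubeOfDigits, Equiv.apply_symm_apply, (hy i).2, Int.floor_add_fract]

end Cube

theorem univ_notMem_HDZ_pi (d : ℕ) [NeZero d] : univ ∉ HDZ (Fin d → ℝ) := by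
  simp [HDZ, Real.dimH_univ_pi_fin, NeZero.ne d]

theorem idealNon_HDZ_cantor_eq_pi_and_idealCov_HDZ_cantor_eq_pi (d : ℕ) [NeZero d] :
    idealNon (HDZ (ℕ → Bool)) = idealNon (HDZ (Fin d → ℝ)) ∧
    idealCov (HDZ (ℕ → Bool)) = idealCov (HDZ (Fin d → ℝ)) := by
  obtain ⟨g, hg⟩ := exists_preimage_mem_HDZ_of_forall_exists_eq
    (v := fun (q : Fin d → ℤ) x => (fun i => (q i : ℝ)) + cubeOfDigits d x) (C := 2)
    (inv_pos.2 (Nat.cast_pos.2 (NeZero.pos d)))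
    (fun q x y => by simpa only [dist_add_left, NNReal.coe_ofNat] using dist_cubeOfDigits_le d x y)
    (exists_intCast_add_cubeOfDigits_eq d)
  refine idealNon_HDZ_eq_and_idealCov_HDZ_eq (univ_notMem_HDZ_pi d)
    (f := fun x _ => ternaryEmbedding x) (fun S hS => ?_) hg
  refine preimage_mem_HDZ_of_dist_le_mul_rpow (C := 2)
    (Real.logb_pos (b := 3) (x := 2) (by norm_num) (by norm_num)) (fun x y => ?_) hS
  simpa only [dist_pi_const, NNReal.coe_ofNat] using dist_le_two_mul_dist_ternaryEmbedding_rpow x y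

/-- For every `d ≥ 1`, `non(HDZ) = non(HDZ_{ℝ^d})` and
`cov(HDZ) = cov(HDZ_{ℝ^d})`, where `HDZ = HDZ_{2^ω}`. -/
theorem stmt7 (d : ℕ) (hd : 0 < d) :
    idealNon (HDZ (ℕ → Bool)) = idealNon (HDZ (EuclideanSpace ℝ (Fin d))) ∧
    idealCov (HDZ (ℕ → Bool)) = idealCov (HDZ (EuclideanSpace ℝ (Fin d))) := by
  have : NeZero d := ⟨hd.ne'⟩
  let e := EuclideanSpace.equiv (Fin d) ℝ
  have hE := idealNon_HDZ_eq_and_idealCov_HDZ_eq (univ_notMem_HDZ_pi d) (f := e) (g := e.symm)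
    (fun S hS => (e.dimH_preimage S).trans hS) (fun S hS => (e.symm.dimH_preimage S).trans hS)
  have hC := idealNon_HDZ_cantor_eq_pi_and_idealCov_HDZ_cantor_eq_pi d
  exact ⟨hC.1.trans hE.1.symm, hC.2.trans hE.2.symm⟩
end

section
/- Let ⟨I_m : m ∈ ω⟩ be a decreasing sequence of σ-ideals over a set X and let I = ⋂_m I_m. Let S = ∏_{n∈ω} {s ⊆ ω : |s| ≤ 2^n}. Suppose that for each m there are maps φ_m : I_m → ω^ω and ψ_m : S → I_m such that for all A ∈ I_m and all T ∈ S: if φ_m(A)(n) ∈ T(n) for all but finitely many n, then A ⊆ ψ_m(T). Then there are maps φ : I → ω^ω and ψ : S → I such that for all A ∈ I and all T ∈ S: if φ(A)(n) ∈ T(n) for all but finitely many n, then A ⊆ ψ(T). (That is, if each Cof(I_m) admits a Galois–Tukey morphism to Lc(ω, 2^id), then so does Cof(I).) -/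
/-!
At stage `n` the combined reduction records the whole tuple `(φ_0(A)(n), …, φ_n(A)(n))`
as a single natural number. Projecting a slalom `T` onto its `m`-th coordinates gives
a slalom `T_m` of the same width, and `φ(A) ∈* T` forces `φ_m(A) ∈* T_m`, because from
stage `m` on the `m`-th coordinate is recorded. Hence `ψ(T) = ⋂_m ψ_m(T_m)` works; it
lies in every `I_m` since it is contained in `ψ_m(T_m)`.
-/

open Set Filter

/-- A σ-ideal on a set `X`: a family of subsets closed under subsets and countable
unions. -/
def IsSigmaIdeal {X : Type*} (I : Set (Set X)) : Prop :=
  (∀ A ∈ I, ∀ B : Set X, B ⊆ A → B ∈ I) ∧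
    (∀ A : ℕ → Set X, (∀ n, A n ∈ I) → (⋃ n, A n) ∈ I)

/-- The slaloms `S = ∏_n {s ⊆ ω : |s| ≤ 2^n}`. -/
def Slalom2 : Set (ℕ → Finset ℕ) := {T | ∀ n, (T n).card ≤ 2 ^ n}

def diagCode (f : ℕ → ℕ → ℕ) (n : ℕ) : ℕ :=
  Encodable.encode (List.ofFn fun i : Fin (n + 1) => f i n)

def diagCoord (m t : ℕ) : ℕ :=
  ((Encodable.decode (α := List ℕ) t).getD []).getD m 0

theorem diagCoord_diagCode {f : ℕ → ℕ → ℕ} {m n : ℕ} (h : m ≤ n) :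
    diagCoord m (diagCode f n) = f m n := by
  simp only [diagCoord, diagCode, Encodable.encodek, Option.getD_some]
  rw [List.getD_eq_getElem _ _ (by simpa using Nat.lt_succ_of_le h), List.getElem_ofFn]

theorem eventually_mem_image_diagCoord {f : ℕ → ℕ → ℕ} {T : ℕ → Finset ℕ}
    (h : ∀ᶠ n in atTop, diagCode f n ∈ T n) (m : ℕ) :
    ∀ᶠ n in atTop, f m n ∈ (T n).image (diagCoord m) := by
  filter_upwards [h, eventually_ge_atTop m] with n hn hmn
  rw [← diagCoord_diagCode (f := f) hmn]
  exact Finset.mem_image_of_mem _ hn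

theorem image_mem_slalom2 {T : ℕ → Finset ℕ} (hT : T ∈ Slalom2) (g : ℕ → ℕ) :
    (fun k => (T k).image g) ∈ Slalom2 :=
  fun k => Finset.card_image_le.trans (hT k)

section

variable {X : Type*}

/-- `(φ, ψ)` is a Galois–Tukey morphism from `Cof(J)` to `Lc(ω, 2^id)`. -/
def IsTukeyMorphismToLc (J : Set (Set X)) (φ : Set X → ℕ → ℕ)
    (ψ : (ℕ → Finset ℕ) → Set X) : Prop :=
  (∀ T ∈ Slalom2, ψ T ∈ J) ∧
    ∀ A ∈ J, ∀ T ∈ Slalom2, (∀ᶠ n in atTop, φ A n ∈ T n) → A ⊆ ψ T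

theorem IsTukeyMorphismToLc.iInter {J : ℕ → Set (Set X)}
    (hJ : ∀ m, ∀ A ∈ J m, ∀ B ⊆ A, B ∈ J m)
    {φ : ℕ → Set X → ℕ → ℕ} {ψ : ℕ → (ℕ → Finset ℕ) → Set X}
    (h : ∀ m, IsTukeyMorphismToLc (J m) (φ m) (ψ m)) :
    IsTukeyMorphismToLc (⋂ m, J m) (fun A => diagCode fun m => φ m A)
      (fun T => ⋂ m, ψ m fun k => (T k).image (diagCoord m)) := by
  constructor
  · intro T hT
    exact mem_iInter.2 fun m =>
      hJ m _ ((h m).1 _ (image_mem_slalom2 hT _)) _ (iInter_subset _ m)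
  · intro A hA T hT hev
    exact subset_iInter fun m => (h m).2 A (mem_iInter.1 hA m) _ (image_mem_slalom2 hT _)
      (eventually_mem_image_diagCoord hev m)

end

theorem stmt18_general {X : Type*} (I : ℕ → Set (Set X)) (hσ : ∀ m, IsSigmaIdeal (I m))
    (hmor : ∀ m, ∃ (φ : Set X → ℕ → ℕ) (ψ : (ℕ → Finset ℕ) → Set X),
      (∀ T ∈ Slalom2, ψ T ∈ I m) ∧
      ∀ A ∈ I m, ∀ T ∈ Slalom2,
        (∀ᶠ n in atTop, φ A n ∈ T n) → A ⊆ ψ T) :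
    ∃ (φ : Set X → ℕ → ℕ) (ψ : (ℕ → Finset ℕ) → Set X),
      (∀ T ∈ Slalom2, ψ T ∈ ⋂ m, I m) ∧
      ∀ A ∈ ⋂ m, I m, ∀ T ∈ Slalom2,
        (∀ᶠ n in atTop, φ A n ∈ T n) → A ⊆ ψ T := by
  choose φ ψ hψ hφ using hmor
  exact ⟨_, _, IsTukeyMorphismToLc.iInter (fun m => (hσ m).1) fun m => ⟨hψ m, hφ m⟩⟩

/-- Let `⟨I_m : m ∈ ω⟩` be a decreasing sequence of σ-ideals on `X`
and `I = ⋂_m I_m`. If for each `m` the relational system `Cof(I_m)` admits a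
Galois–Tukey morphism to `Lc(ω, 2^id)` — i.e. there are `φ_m : I_m → ω^ω` and
`ψ_m : S → I_m` such that `φ_m(A)(n) ∈ T(n)` for all but finitely many `n` implies
`A ⊆ ψ_m(T)` — then so does `Cof(I)`. -/
theorem stmt18 {X : Type*} (I : ℕ → Set (Set X)) (hσ : ∀ m, IsSigmaIdeal (I m))
    (hdec : ∀ m, I (m + 1) ⊆ I m)
    (hmor : ∀ m, ∃ (φ : Set X → ℕ → ℕ) (ψ : (ℕ → Finset ℕ) → Set X),
      (∀ T ∈ Slalom2, ψ T ∈ I m) ∧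
      ∀ A ∈ I m, ∀ T ∈ Slalom2,
        (∀ᶠ n in atTop, φ A n ∈ T n) → A ⊆ ψ T) :
    ∃ (φ : Set X → ℕ → ℕ) (ψ : (ℕ → Finset ℕ) → Set X),
      (∀ T ∈ Slalom2, ψ T ∈ ⋂ m, I m) ∧
      ∀ A ∈ ⋂ m, I m, ∀ T ∈ Slalom2,
        (∀ᶠ n in atTop, φ A n ∈ T n) → A ⊆ ψ T :=
  stmt18_general I hσ hmor
end
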